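/- Let c_1,…,c_n be reals with c_1 = 0 and c_n = 1, and let d_1,…,d_n be reals with d_1 = d_n = 1 and d_i ≠ 0 for all i. Set A = F·D, Ã = T·(D·A·G)ᵀ·T, C = diag(c_1,…,c_n), and C̃ = I − T·C·T. Suppose A satisfies the fourth-order conditions: Tr(P·A) = 1, Tr(P·A·C) = 1/2, Tr(P·A·C·C) = 1/3, Tr(P·A·A·C) = 1/6, Tr(P·A·C·C·C) = 1/4, Tr(P·A·C·A·C) = 1/8, Tr(P·A·A·C·C) = 1/12, and Tr(P·A·A·A·C) = 1/24. Then the c-reflected tableau satisfies the same conditions: Tr(P·Ã) = 1, Tr(P·Ã·C̃) = 1/2, Tr(P·Ã·C̃·C̃) = 1/3, Tr(P·Ã·Ã·C̃) = 1/6, Tr(P·Ã·C̃·C̃·C̃) = 1/4, Tr(P·Ã·C̃·Ã·C̃) = 1/8, Tr(P·Ã·Ã·C̃·C̃) = 1/12, and Tr(P·Ã·Ã·Ã·C̃) = 1/24. -/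

import Mathlib

open Finset Matrix
/-- The matrix `D` with entries `d_{ij}`: `0` for `i < j`, `d_i` for `i = j`, and
`-d_j · (∏_{k=j+1}^{i-1} (1 - d_k)) · d_i` for `i > j`. -/
def Dmat (n : ℕ) (d : Fin n → ℝ) : Matrix (Fin n) (Fin n) ℝ :=
  Matrix.of fun i j =>
    if i < j then 0
    else if i = j then d i
    else -(d j) * (∏ k ∈ Finset.Ioo j i, (1 - d k)) * d i

/-- The lower-triangular matrix `G` with `G_{ii} = 1/d_i`, `G_{ij} = 1` for `i > j`. -/
noncomputable def Gmat (n : ℕ) (d : Fin n → ℝ) : Matrix (Fin n) (Fin n) ℝ :=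
  Matrix.of fun i j => if i = j then 1 / d i else if j < i then 1 else 0

/-- The matrix `F` with `F_{ij} = c_i - c_j` for `i > j` and `0` otherwise. -/
def Fmat (n : ℕ) (c : Fin n → ℝ) : Matrix (Fin n) (Fin n) ℝ :=
  Matrix.of fun i j => if j < i then c i - c j else 0

/-- The antidiagonal permutation matrix `T`, `T_{ij} = 1` iff `i + j = n + 1` (1-based). -/
def Tmat (n : ℕ) : Matrix (Fin n) (Fin n) ℝ :=
  Matrix.of fun i j => if (i : ℕ) + (j : ℕ) + 1 = n then 1 else 0

/-- The matrix `P` whose last column consists of ones and all other entries are `0`. -/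
def Pmat (n : ℕ) : Matrix (Fin n) (Fin n) ℝ :=
  Matrix.of fun _ j => if (j : ℕ) + 1 = n then 1 else 0

/-! The column sums of `D` telescope, which shows `G = D⁻¹`; together with `F = CG - GC`
this gives `(1 - C) D = D (1 - C + A)`. Hence `reflection X = T (D X G)ᵀ T` is an
anti-automorphism with `Ã = reflection A` and `C̃ = reflection (1 - C + A)`, and
`Tr (P (reflection X)) = Tr (P X)` because `d₁ = dₙ = 1` makes the first column and the last
row of `G` consist of ones. So every condition on `(Ã, C̃)` is `Tr (P W)` for a word `W` in `A`
and `1 - C + A` ending in `A`. Finally `Tr (P X) = (X 𝟙)ₙ`, `A 𝟙 = C 𝟙 = c` and `(C v)ₙ = vₙ`,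
which turns each of these into a linear combination of the hypotheses. -/

section Dmat

variable {n : ℕ} {d : Fin n → ℝ}

lemma sum_Iio_Dmat_apply (i j : Fin n) :
    ∑ k ∈ Iio i, Dmat n d k j = if j < i then d j * ∏ k ∈ Ioo j i, (1 - d k) else 0 := by
  obtain ⟨i, hi⟩ := i
  induction i with
  | zero =>
    have hIio : Iio (⟨0, hi⟩ : Fin n) = ∅ := by
      ext k; simp only [mem_Iio, Fin.lt_def, notMem_empty, iff_false]; omega
    rw [hIio, sum_empty, if_neg (by simp only [Fin.lt_def]; omega)]
  | succ t ih =>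
    have ht : t < n := by omega
    have ht' : (⟨t, ht⟩ : Fin n) < ⟨t + 1, hi⟩ := Fin.mk_lt_mk.2 t.lt_succ_self
    have hIio : Iio (⟨t + 1, hi⟩ : Fin n) = insert ⟨t, ht⟩ (Iio ⟨t, ht⟩) := by
      ext k; simp only [mem_Iio, mem_insert, Fin.lt_def, Fin.ext_iff]; omega
    rw [hIio, sum_insert (by simp), ih ht]
    rcases lt_trichotomy j ⟨t, ht⟩ with h | rfl | h
    · have hIoo : Ioo j ⟨t + 1, hi⟩ = insert ⟨t, ht⟩ (Ioo j ⟨t, ht⟩) := by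
        ext k
        simp only [mem_Ioo, mem_insert, Fin.lt_def, Fin.ext_iff] at h ⊢
        omega
      have hD : Dmat n d ⟨t, ht⟩ j
          = -d j * (∏ k ∈ Ioo j ⟨t, ht⟩, (1 - d k)) * d ⟨t, ht⟩ := by
        simp [Dmat, h.ne', not_lt.2 h.le]
      rw [if_pos h, if_pos (h.trans ht'), hIoo, prod_insert (by simp), hD]
      ring
    · have hIoo : Ioo (⟨t, ht⟩ : Fin n) ⟨t + 1, hi⟩ = ∅ := by
        ext k; simp only [mem_Ioo, Fin.lt_def, notMem_empty, iff_false]; omega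
      rw [if_neg (lt_irrefl _), if_pos ht', hIoo, prod_empty]
      simp [Dmat]
    · have h' : ¬ j < ⟨t + 1, hi⟩ := by
        simp only [Fin.lt_def] at h ⊢; omega
      rw [if_neg (lt_asymm h), if_neg h']
      simp [Dmat, h]

lemma Gmat_mul_Dmat (hd : ∀ i, d i ≠ 0) : Gmat n d * Dmat n d = 1 := by
  ext i j
  have hsplit : ∀ k, Gmat n d i k * Dmat n d k j =
      (if k < i then Dmat n d k j else 0) + (if k = i then Dmat n d i j / d i else 0) := by
    intro k
    rcases lt_trichotomy k i with h | rfl | h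
    · simp [Gmat, h, h.ne, h.ne']
    · simp [Gmat, div_eq_inv_mul]
    · simp [Gmat, h.ne, h.ne', not_lt.2 h.le]
  rw [mul_apply, sum_congr rfl fun k _ => hsplit k, sum_add_distrib, ← sum_filter,
    filter_gt_eq_Iio, sum_Iio_Dmat_apply, sum_ite_eq', if_pos (mem_univ _), one_apply]
  rcases lt_trichotomy j i with h | rfl | h
  · simp only [Dmat, of_apply, if_pos h, if_neg (lt_asymm h), if_neg h.ne']
    field_simp [hd i]
    ring
  · simp [Dmat, hd j]
  · simp [Dmat, h, h.ne, not_lt.2 h.le]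

lemma Dmat_mul_Gmat (hd : ∀ i, d i ≠ 0) : Dmat n d * Gmat n d = 1 :=
  mul_eq_one_comm.1 (Gmat_mul_Dmat hd)

lemma Fmat_eq_diagonal_mul_sub_mul_diagonal (c : Fin n → ℝ) :
    Fmat n c = diagonal c * Gmat n d - Gmat n d * diagonal c := by
  ext i j
  rw [Matrix.sub_apply, diagonal_mul, mul_diagonal]
  rcases lt_trichotomy j i with h | rfl | h
  · simp [Fmat, Gmat, h, h.ne']
  · simp [Fmat, mul_comm]
  · simp [Fmat, Gmat, h.ne, not_lt.2 h.le]

lemma Dmat_mul_Fmat_mul_Dmat (hd : ∀ i, d i ≠ 0) (c : Fin n → ℝ) :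
    Dmat n d * (Fmat n c * Dmat n d) = Dmat n d * diagonal c - diagonal c * Dmat n d := by
  rw [Fmat_eq_diagonal_mul_sub_mul_diagonal (d := d), sub_mul, mul_sub, mul_assoc, mul_assoc,
    Gmat_mul_Dmat hd, mul_one, ← mul_assoc, ← mul_assoc, Dmat_mul_Gmat hd, one_mul]

end Dmat

section Tmat

variable {n : ℕ}

lemma Tmat_apply (i j : Fin n) : Tmat n i j = if j = i.rev then 1 else 0 := by
  simp only [Tmat, of_apply, Fin.ext_iff, Fin.val_rev]
  congr 1
  apply propext
  omega

lemma Tmat_mul_apply (M : Matrix (Fin n) (Fin n) ℝ) (i j : Fin n) :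
    (Tmat n * M) i j = M i.rev j := by
  simp [mul_apply, Tmat_apply]

lemma Tmat_mulVec_apply (v : Fin n → ℝ) (i : Fin n) : (Tmat n *ᵥ v) i = v i.rev := by
  simp [mulVec, dotProduct, Tmat_apply]

lemma Tmat_mulVec_one : Tmat n *ᵥ 1 = 1 := by
  ext i; simp [Tmat_mulVec_apply]

lemma Tmat_mul_Tmat : Tmat n * Tmat n = 1 := by
  ext i j
  simp [Tmat_mul_apply, Tmat_apply, one_apply, eq_comm]

end Tmat

noncomputable def reflection (n : ℕ) (d : Fin n → ℝ) (X : Matrix (Fin n) (Fin n) ℝ) :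
    Matrix (Fin n) (Fin n) ℝ :=
  Tmat n * (Dmat n d * X * Gmat n d)ᵀ * Tmat n

section Reflection

variable {n : ℕ} {d : Fin n → ℝ}

lemma reflection_mul (hd : ∀ i, d i ≠ 0) (X Y : Matrix (Fin n) (Fin n) ℝ) :
    reflection n d X * reflection n d Y = reflection n d (Y * X) := by
  have hGD : Dmat n d * Y * Gmat n d * (Dmat n d * X * Gmat n d)
      = Dmat n d * (Y * X) * Gmat n d := by
    rw [show Dmat n d * Y * Gmat n d * (Dmat n d * X * Gmat n d)
        = Dmat n d * Y * (Gmat n d * Dmat n d) * X * Gmat n d by simp only [mul_assoc],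
      Gmat_mul_Dmat hd, mul_one, mul_assoc (Dmat n d) Y X]
  rw [reflection, reflection, reflection, ← hGD, transpose_mul (Dmat n d * Y * Gmat n d)]
  simp only [mul_assoc]
  rw [← mul_assoc (Tmat n) (Tmat n), Tmat_mul_Tmat, one_mul]

lemma reflection_one_sub_diagonal_add (hd : ∀ i, d i ≠ 0) (c : Fin n → ℝ) :
    reflection n d (1 - diagonal c + Fmat n c * Dmat n d) = 1 - Tmat n * diagonal c * Tmat n := by
  have h : Dmat n d * (1 - diagonal c + Fmat n c * Dmat n d) * Gmat n d = 1 - diagonal c := by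
    rw [mul_add, mul_sub, mul_one, Dmat_mul_Fmat_mul_Dmat hd, sub_add_sub_cancel, sub_mul,
      Dmat_mul_Gmat hd, mul_assoc, Dmat_mul_Gmat hd, mul_one]
  rw [reflection, h, transpose_sub, transpose_one, diagonal_transpose, mul_sub, sub_mul, mul_one,
    Tmat_mul_Tmat]

end Reflection

section Endpoints

variable {m : ℕ} {d : Fin (m + 1) → ℝ}

lemma Gmat_apply_zero (hd0 : d 0 = 1) (i : Fin (m + 1)) : Gmat (m + 1) d i 0 = 1 := by
  rcases eq_or_ne i 0 with rfl | h
  · simp [Gmat, hd0]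
  · simp [Gmat, h, Fin.pos_iff_ne_zero.2 h]

lemma Gmat_last_apply (hdl : d (Fin.last m) = 1) (j : Fin (m + 1)) :
    Gmat (m + 1) d (Fin.last m) j = 1 := by
  rcases eq_or_ne j (Fin.last m) with rfl | h
  · simp [Gmat, hdl]
  · simp [Gmat, Ne.symm h, Fin.lt_last_iff_ne_last.2 h]

lemma one_vecMul_Dmat (hd : ∀ i, d i ≠ 0) (hdl : d (Fin.last m) = 1) :
    1 ᵥ* Dmat (m + 1) d = Pi.single (Fin.last m) 1 := by
  have hG : Pi.single (Fin.last m) 1 ᵥ* Gmat (m + 1) d = 1 := by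
    ext j; simp [Gmat_last_apply hdl]
  rw [← hG, vecMul_vecMul, Gmat_mul_Dmat hd, vecMul_one]

lemma Dmat_mulVec_one (hd : ∀ i, d i ≠ 0) (hd0 : d 0 = 1) :
    Dmat (m + 1) d *ᵥ 1 = Pi.single 0 1 := by
  have hG : Gmat (m + 1) d *ᵥ Pi.single 0 1 = 1 := by
    ext i; simp [Gmat_apply_zero hd0]
  rw [← hG, mulVec_mulVec, Dmat_mul_Gmat hd, one_mulVec]

lemma Fmat_mul_Dmat_mulVec_one {c : Fin (m + 1) → ℝ} (hd : ∀ i, d i ≠ 0) (hd0 : d 0 = 1)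
    (hc0 : c 0 = 0) : (Fmat (m + 1) c * Dmat (m + 1) d) *ᵥ 1 = c := by
  rw [← mulVec_mulVec, Dmat_mulVec_one hd hd0, mulVec_single_one]
  ext i
  rcases eq_or_ne i 0 with rfl | h
  · simp [Fmat, hc0]
  · simp [Fmat, Fin.pos_iff_ne_zero.2 h, hc0]

lemma Pmat_apply (i j : Fin (m + 1)) : Pmat (m + 1) i j = if j = Fin.last m then 1 else 0 := by
  simp [Pmat, Fin.ext_iff]

lemma trace_Pmat_mul (X : Matrix (Fin (m + 1)) (Fin (m + 1)) ℝ) :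
    trace (Pmat (m + 1) * X) = (X *ᵥ 1) (Fin.last m) := by
  simp [trace, mul_apply, Pmat_apply, mulVec, dotProduct]

lemma trace_Pmat_mul_reflection (hd : ∀ i, d i ≠ 0) (hd0 : d 0 = 1) (hdl : d (Fin.last m) = 1)
    (X : Matrix (Fin (m + 1)) (Fin (m + 1)) ℝ) :
    trace (Pmat (m + 1) * reflection (m + 1) d X) = trace (Pmat (m + 1) * X) := by
  rw [trace_Pmat_mul, trace_Pmat_mul, reflection, ← mulVec_mulVec, Tmat_mulVec_one,
    ← mulVec_mulVec, Tmat_mulVec_apply, Fin.rev_last, mulVec_transpose, ← vecMul_vecMul,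
    ← vecMul_vecMul, one_vecMul_Dmat hd hdl, single_one_vecMul]
  simp [vecMul, dotProduct, mulVec, Gmat_apply_zero hd0]

end Endpoints

theorem stmt_16 (n : ℕ) (hn : 2 ≤ n) (c d : Fin n → ℝ)
    (hc1 : c ⟨0, by omega⟩ = 0) (hcn : c ⟨n - 1, by omega⟩ = 1)
    (hd1 : d ⟨0, by omega⟩ = 1) (hdn : d ⟨n - 1, by omega⟩ = 1)
    (hd : ∀ i : Fin n, d i ≠ 0)
    (A Atil C Ctil : Matrix (Fin n) (Fin n) ℝ)
    (hA : A = Fmat n c * Dmat n d)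
    (hAtil : Atil = Tmat n * (Dmat n d * A * Gmat n d)ᵀ * Tmat n)
    (hC : C = Matrix.diagonal c)
    (hCtil : Ctil = 1 - Tmat n * C * Tmat n)
    (h2 : Matrix.trace (Pmat n * A * C) = 1 / 2)
    (h3 : Matrix.trace (Pmat n * A * C * C) = 1 / 3)
    (h4 : Matrix.trace (Pmat n * A * A * C) = 1 / 6)
    (h5 : Matrix.trace (Pmat n * A * C * C * C) = 1 / 4)
    (h6 : Matrix.trace (Pmat n * A * C * A * C) = 1 / 8)
    (h7 : Matrix.trace (Pmat n * A * A * C * C) = 1 / 12)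
    (h8 : Matrix.trace (Pmat n * A * A * A * C) = 1 / 24) :
    Matrix.trace (Pmat n * Atil) = 1 ∧
    Matrix.trace (Pmat n * Atil * Ctil) = 1 / 2 ∧
    Matrix.trace (Pmat n * Atil * Ctil * Ctil) = 1 / 3 ∧
    Matrix.trace (Pmat n * Atil * Atil * Ctil) = 1 / 6 ∧
    Matrix.trace (Pmat n * Atil * Ctil * Ctil * Ctil) = 1 / 4 ∧
    Matrix.trace (Pmat n * Atil * Ctil * Atil * Ctil) = 1 / 8 ∧
    Matrix.trace (Pmat n * Atil * Atil * Ctil * Ctil) = 1 / 12 ∧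
    Matrix.trace (Pmat n * Atil * Atil * Atil * Ctil) = 1 / 24 := by
  obtain ⟨m, rfl⟩ : ∃ m, n = m + 1 := ⟨n - 1, by omega⟩
  replace hc1 : c 0 = 0 := hc1
  replace hcn : c (Fin.last m) = 1 := hcn
  replace hd1 : d 0 = 1 := hd1
  replace hdn : d (Fin.last m) = 1 := hdn
  have hAtil' : Atil = reflection (m + 1) d A := hAtil
  have hCtil' : Ctil = reflection (m + 1) d (1 - C + A) := by
    rw [hCtil, hC, hA, reflection_one_sub_diagonal_add hd]
  have hA1 : A *ᵥ 1 = C *ᵥ 1 := by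
    ext i
    simp [hA, hC, Fmat_mul_Dmat_mulVec_one hd hd1 hc1, mulVec_diagonal]
  have hC_last : ∀ v, (C *ᵥ v) (Fin.last m) = v (Fin.last m) := by
    simp [hC, mulVec_diagonal, hcn]
  rw [hAtil', hCtil']
  simp only [mul_assoc, reflection_mul hd, trace_Pmat_mul_reflection hd hd1 hdn]
  simp only [mul_assoc, trace_Pmat_mul, ← mulVec_mulVec, hA1, add_mulVec, sub_mulVec, one_mulVec,
    mulVec_add, mulVec_sub, Pi.add_apply, Pi.sub_apply, hC_last, Pi.one_apply, true_and]
    at h2 h3 h4 h5 h6 h7 h8 ⊢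
  and_intros <;> linarith
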